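/- Let x, y ∈ ℝ^n with sums ν_x = Σ x_k, ν_y = Σ y_k, and (unnormalized) covariance S = Σ_k (x_k − ν_x/n)(y_k − ν_y/n). If the i-th entries are swapped (x_i ↔ y_i), then the new unnormalized covariance S' satisfies n·S' = n·S + (x_i − y_i)² + (x_i − y_i)(ν_y − ν_x). -/
import Mathlib

lemma cov_key (n : ℕ) (hn : 0 < n) (u v : Fin n → ℝ) :
    (n : ℝ) * ∑ k, (u k - (∑ j, u j) / n) * (v k - (∑ j, v j) / n)
      = n * (∑ k, u k * v k) - (∑ j, u j) * (∑ j, v j) := by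
  have hn' : (n : ℝ) ≠ 0 := Nat.cast_ne_zero.mpr hn.ne'
  set a := ∑ j, u j
  set b := ∑ j, v j
  have hexp : ∀ k, (u k - a / n) * (v k - b / n)
      = u k * v k - u k * (b / n) - (a / n) * v k + (a / n) * (b / n) := by
    intro k; ring
  rw [Finset.sum_congr rfl fun k _ => hexp k]
  simp only [Finset.sum_add_distrib, Finset.sum_sub_distrib, ← Finset.sum_mul,
    ← Finset.mul_sum, Finset.sum_const, Finset.card_univ, Fintype.card_fin, nsmul_eq_mul]
  field_simp
  ring

/-- Incremental update of the unnormalized covariance when the `i`-th entries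
of paired vectors are swapped: `n·S' = n·S + (x i - y i)² + (x i - y i)(ν_y - ν_x)`. -/
theorem cov_update_swap (n : ℕ) (hn : 0 < n) (x y : Fin n → ℝ) (i : Fin n)
    (νx νy S S' : ℝ)
    (hνx : νx = ∑ k, x k)
    (hνy : νy = ∑ k, y k)
    (hS : S = ∑ k, (x k - νx / n) * (y k - νy / n))
    (hS' : S' = ∑ k,
      (Function.update x i (y i) k - (∑ j, Function.update x i (y i) j) / n) *
      (Function.update y i (x i) k - (∑ j, Function.update y i (x i) j) / n)) :
    (n : ℝ) * S' = n * S + (x i - y i) ^ 2 + (x i - y i) * (νy - νx) := by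
  subst hνx hνy hS hS'
  have hmem : i ∈ Finset.univ := Finset.mem_univ i
  have hsx : ∑ j, Function.update x i (y i) j = (∑ j, x j) - x i + y i := by
    rw [Finset.sum_update_of_mem hmem]
    rw [← Finset.erase_eq, Finset.sum_erase_eq_sub hmem]; ring
  have hsy : ∑ j, Function.update y i (x i) j = (∑ j, y j) - y i + x i := by
    rw [Finset.sum_update_of_mem hmem]
    rw [← Finset.erase_eq, Finset.sum_erase_eq_sub hmem]; ring
  have hprod : ∑ k, Function.update x i (y i) k * Function.update y i (x i) k
      = ∑ k, x k * y k := by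
    refine Finset.sum_congr rfl fun k _ => ?_
    by_cases hk : k = i
    · subst hk; simp [Function.update_self]; ring
    · simp [Function.update_of_ne hk]
  have h1 := cov_key n hn (Function.update x i (y i)) (Function.update y i (x i))
  have h2 := cov_key n hn x y
  rw [h1, h2, hsx, hsy, hprod]
  ring
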